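/- arXiv:math/9911204 — 9 statements merged into one kernel-verified Lean document; each statement's English description precedes it below -/
import Mathlib

section
/- Let L be a type and x : L. Let C' = C'({x}, Set.univ \ {x}) be the consequence operator defined by C'(A) = A ∪ {x} if Set.univ \ {x} ⊆ A and C'(A) = A otherwise. Then C' is an atom over the identity in the partially ordered set of consequence operators on L: the identity operator I satisfies I ≤ C' and I ≠ C', and there is no consequence operator C₃ on L with I ≤ C₃, I ≠ C₃, C₃ ≤ C', and C₃ ≠ C'. -/
open scoped Classical

def IsConsequenceOperator {L : Type*} (C : Set L → Set L) : Prop :=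
  (∀ X : Set L, X ⊆ C X) ∧ (∀ X : Set L, C (C X) = C X) ∧
    ∀ X Y : Set L, X ⊆ Y → C X ⊆ C Y

/-- Theorem 2.7 (first part): each C'({x}, L - {x}) is an atom over the
identity in the poset of consequence operators. -/
theorem stmt_5 {L : Type*} (x : L) :
    (∀ A : Set L,
        A ⊆ (if Set.univ \ {x} ⊆ A then A ∪ {x} else A)) ∧
    (fun A : Set L => A) ≠
      (fun A : Set L => if Set.univ \ {x} ⊆ A then A ∪ {x} else A) ∧
    ¬ ∃ C₃ : Set L → Set L, IsConsequenceOperator C₃ ∧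
        (∀ A : Set L, A ⊆ C₃ A) ∧
        (fun A : Set L => A) ≠ C₃ ∧
        (∀ A : Set L,
          C₃ A ⊆ (if Set.univ \ {x} ⊆ A then A ∪ {x} else A)) ∧
        C₃ ≠ (fun A : Set L => if Set.univ \ {x} ⊆ A then A ∪ {x} else A) := by
  refine ⟨?_, ?_, ?_⟩
  · intro A
    split
    · exact Set.subset_union_left
    · exact le_rfl
  · intro h
    have h' := congrFun h (Set.univ \ {x})
    rw [if_pos subset_rfl] at h'
    have hx : x ∈ Set.univ \ {x} ∪ {x} := Or.inr rfl
    rw [← h'] at hx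
    exact hx.2 rfl
  · rintro ⟨C₃, _, hle, hne, hle', hne'⟩
    obtain ⟨A, hA⟩ : ∃ A, C₃ A ≠ A := by
      by_contra h
      push_neg at h
      exact hne (funext fun A => (h A).symm)
    have hsub : Set.univ \ {x} ⊆ A := by
      by_contra h
      have h2 := hle' A
      rw [if_neg h] at h2
      exact hA (h2.antisymm (hle A))
    have hCA : C₃ A = A ∪ {x} := by
      have h2 := hle' A
      rw [if_pos hsub] at h2
      refine h2.antisymm (Set.union_subset (hle A) ?_)
      intro y hy
      rcases hy with rfl
      by_contra hxC
      refine hA (subset_antisymm (fun z hz => ?_) (hle A))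
      rcases h2 hz with hz' | hz'
      · exact hz'
      · exact absurd (hz' ▸ hz) hxC
    have hxA : x ∉ A := by
      intro hx
      apply hA
      rw [hCA]
      exact Set.union_eq_self_of_subset_right (by simpa using hx)
    have hAeq : A = Set.univ \ {x} :=
      subset_antisymm (fun y hy => ⟨trivial, fun h => hxA (h ▸ hy)⟩) hsub
    apply hne'
    funext B
    by_cases hB : Set.univ \ {x} ⊆ B
    · rw [if_pos hB]
      by_cases hxB : x ∈ B
      · have hu : B ∪ {x} = B := Set.union_eq_self_of_subset_right (by simpa using hxB)
        rw [hu]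
        refine subset_antisymm ?_ (hle B)
        have h2 := hle' B
        rw [if_pos hB, hu] at h2
        exact h2
      · have hBeq : B = Set.univ \ {x} :=
          subset_antisymm (fun y hy => ⟨trivial, fun h => hxB (h ▸ hy)⟩) hB
        rw [hBeq, ← hAeq, hCA]
    · rw [if_neg hB]
      have h2 := hle' B
      rw [if_neg hB] at h2
      exact h2.antisymm (hle B)
end

section
/- Let L be a type and C an axiomatic consequence operator on L (C ∅ ≠ ∅). Then there exists x : L such that C'({x}, Set.univ \ {x}) ≤ C, where C'({x}, Set.univ \ {x}) is the operator sending A to A ∪ {x} if Set.univ \ {x} ⊆ A and to A otherwise, and ≤ is the pointwise order. (The axiomatic consequence operators densely cover the set of atoms E₀ = {C'({x}, Set.univ \ {x}) | x : L}.) -/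
open scoped Classical

/-- Theorem 2.7 (second part): every axiomatic consequence operator lies
above some atom C'({x}, L - {x}). -/
theorem stmt_6 {L : Type*} (C : Set L → Set L)
    (hC : IsConsequenceOperator C) (hax : C ∅ ≠ ∅) :
    ∃ x : L, ∀ A : Set L,
      (if Set.univ \ {x} ⊆ A then A ∪ {x} else A) ⊆ C A := by
  obtain ⟨x, hx⟩ := Set.nonempty_iff_ne_empty.2 hax
  refine ⟨x, fun A => ?_⟩
  have hxA : x ∈ C A := hC.2.2 ∅ A (Set.empty_subset A) hx
  split
  · exact Set.union_subset (hC.1 A) (by simpa using hxA)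
  · exact hC.1 A
end

section
/- Let L be a type and C₁, C₂ finite consequence operators on L. Then the map C₁ ∧ C₂ : Set L → Set L defined by (C₁ ∧ C₂)(X) = C₁(X) ∩ C₂(X) is a finite consequence operator on L. -/
def IsFiniteConsequenceOperator {L : Type*} (C : Set L → Set L) : Prop :=
  IsConsequenceOperator C ∧
    ∀ X : Set L, C X = ⋃ A ∈ {A : Set L | A ⊆ X ∧ A.Finite}, C A

/-- The pointwise intersection of two finite consequence operators is a
finite consequence operator. -/
theorem stmt_8 {L : Type*} (C₁ C₂ : Set L → Set L)
    (h₁ : IsFiniteConsequenceOperator C₁) (h₂ : IsFiniteConsequenceOperator C₂) :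
    IsFiniteConsequenceOperator (fun X : Set L => C₁ X ∩ C₂ X) := by
  obtain ⟨⟨e₁, i₁, m₁⟩, f₁⟩ := h₁
  obtain ⟨⟨e₂, i₂, m₂⟩, f₂⟩ := h₂
  refine ⟨⟨fun X => Set.subset_inter (e₁ X) (e₂ X), ?_, fun X Y hXY =>
    Set.inter_subset_inter (m₁ X Y hXY) (m₂ X Y hXY)⟩, ?_⟩
  · intro X
    apply Set.Subset.antisymm
    · apply Set.inter_subset_inter
      · calc C₁ (C₁ X ∩ C₂ X) ⊆ C₁ (C₁ X) := m₁ _ _ Set.inter_subset_left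
          _ = C₁ X := i₁ X
      · calc C₂ (C₁ X ∩ C₂ X) ⊆ C₂ (C₂ X) := m₂ _ _ Set.inter_subset_right
          _ = C₂ X := i₂ X
    · exact Set.subset_inter (e₁ _) (e₂ _)
  · intro X
    apply Set.Subset.antisymm
    · rintro x ⟨hx1, hx2⟩
      rw [f₁ X] at hx1
      rw [f₂ X] at hx2
      simp only [Set.mem_iUnion, Set.mem_setOf_eq] at hx1 hx2 ⊢
      obtain ⟨A, ⟨hAX, hAf⟩, hxA⟩ := hx1
      obtain ⟨B, ⟨hBX, hBf⟩, hxB⟩ := hx2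
      exact ⟨A ∪ B, ⟨Set.union_subset hAX hBX, hAf.union hBf⟩,
        m₁ _ _ Set.subset_union_left hxA, m₂ _ _ Set.subset_union_right hxB⟩
    · simp only [Set.iUnion_subset_iff, Set.mem_setOf_eq]
      rintro A ⟨hAX, -⟩
      exact Set.inter_subset_inter (m₁ _ _ hAX) (m₂ _ _ hAX)
end

section
/- Let L be a type with at least 3 elements. Then there exist finite consequence operators C₁ and C₂ on L such that the map X ↦ C₁(X) ∪ C₂(X) is NOT a consequence operator on L (in particular it fails idempotence). -/
/-- The operator adding `q` whenever `p` is present. -/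
def addIf {L : Type*} (p q : L) (X : Set L) : Set L :=
  X ∪ {x | p ∈ X ∧ x = q}

lemma addIf_mem_iff {L : Type*} (p q : L) (X : Set L) (x : L) :
    x ∈ addIf p q X ↔ x ∈ X ∨ (p ∈ X ∧ x = q) := Iff.rfl

lemma addIf_fco {L : Type*} (p q : L) : IsFiniteConsequenceOperator (addIf p q) := by
  have hsub : ∀ X : Set L, X ⊆ addIf p q X := fun X x hx => Or.inl hx
  have hmono : ∀ X Y : Set L, X ⊆ Y → addIf p q X ⊆ addIf p q Y := by
    rintro X Y h x (hx | ⟨hp, rfl⟩)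
    · exact Or.inl (h hx)
    · exact Or.inr ⟨h hp, rfl⟩
  have hpmem : ∀ X : Set L, p ∈ addIf p q X ↔ p ∈ X := by
    intro X
    constructor
    · rintro (h | ⟨h, rfl⟩) <;> exact h
    · exact fun h => Or.inl h
  have hidem : ∀ X : Set L, addIf p q (addIf p q X) = addIf p q X := by
    intro X
    apply Set.Subset.antisymm _ (hsub _)
    rintro x (hx | ⟨hp, rfl⟩)
    · exact hx
    · exact Or.inr ⟨(hpmem X).mp hp, rfl⟩
  refine ⟨⟨hsub, hidem, hmono⟩, ?_⟩
  intro X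
  apply Set.Subset.antisymm
  · rintro x (hx | ⟨hp, hxq⟩)
    · have hmem : x ∈ addIf p q ({x} : Set L) := hsub ({x} : Set L) rfl
      have hs : ({x} : Set L) ∈ {A : Set L | A ⊆ X ∧ A.Finite} :=
        ⟨Set.singleton_subset_iff.mpr hx, Set.finite_singleton x⟩
      exact Set.mem_biUnion hs hmem
    · have hmem : x ∈ addIf p q ({p} : Set L) := Or.inr ⟨rfl, hxq⟩
      have hs : ({p} : Set L) ∈ {A : Set L | A ⊆ X ∧ A.Finite} :=
        ⟨Set.singleton_subset_iff.mpr hp, Set.finite_singleton p⟩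
      exact Set.mem_biUnion hs hmem
  · intro x hx
    simp only [Set.mem_iUnion] at hx
    obtain ⟨A, ⟨hA, _⟩, hxA⟩ := hx
    exact hmono A X hA hxA

/-- Example 2.8: for a language with at least 3 elements, the pointwise
union of two finite consequence operators need not be a consequence
operator. -/
theorem stmt_9 {L : Type*} (a b c : L) (hab : a ≠ b) (hac : a ≠ c) (hbc : b ≠ c) :
    ∃ C₁ C₂ : Set L → Set L,
      IsFiniteConsequenceOperator C₁ ∧ IsFiniteConsequenceOperator C₂ ∧
      ¬ IsConsequenceOperator (fun X : Set L => C₁ X ∪ C₂ X) := by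
  refine ⟨addIf a b, addIf b c, addIf_fco a b, addIf_fco b c, ?_⟩
  rintro ⟨-, hidem, -⟩
  have h := hidem ({a} : Set L)
  set F := fun X : Set L => addIf a b X ∪ addIf b c X with hF
  have hc1 : c ∈ F (F {a}) := by
    have hb : b ∈ F ({a} : Set L) := Or.inl (Or.inr ⟨rfl, rfl⟩)
    exact Or.inr (Or.inr ⟨hb, rfl⟩)
  have hc2 : c ∉ F ({a} : Set L) := by
    rintro ((h' | ⟨-, h'⟩) | (h' | ⟨h', -⟩))
    · exact hac h'.symm
    · exact hbc h'.symm
    · exact hac h'.symm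
    · exact hab h'.symm
  rw [h] at hc1
  exact hc2 hc1
end

section
/- Let L be a type, B : Set L, and let 𝒜 be a nonempty family of subsets of L. Then C(⋂₀ 𝒜, B) is the infimum of the family {C(A, B) | A ∈ 𝒜} within 𝒞(B) = {C(X,B) | X : Set L} under the pointwise order: C(⋂₀ 𝒜, B) ≤ C(A, B) for every A ∈ 𝒜, and for any Y : Set L, if C(Y, B) ≤ C(A, B) for every A ∈ 𝒜 then C(Y, B) ≤ C(⋂₀ 𝒜, B). -/
open scoped Classical

/-- The finite consequence operator C(X,Y): A ↦ A ∪ X if A ∩ Y ≠ ∅, A otherwise. -/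
noncomputable def Cop {L : Type*} (X Y : Set L) : Set L → Set L :=
  fun A => if A ∩ Y ≠ ∅ then A ∪ X else A

/-- Theorem 3.1 (infimum part): C(⋂₀ 𝒜, B) is the infimum of
{C(A,B) | A ∈ 𝒜} in the pointwise order. -/
theorem stmt_10 {L : Type*} (B : Set L) (𝒜 : Set (Set L)) (h𝒜 : 𝒜.Nonempty) :
    (∀ A ∈ 𝒜, ∀ X : Set L, Cop (⋂₀ 𝒜) B X ⊆ Cop A B X) ∧
    (∀ Y : Set L, (∀ A ∈ 𝒜, ∀ X : Set L, Cop Y B X ⊆ Cop A B X) →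
      ∀ X : Set L, Cop Y B X ⊆ Cop (⋂₀ 𝒜) B X) := by
  constructor
  · intro A hA X
    unfold Cop
    split_ifs with h
    · exact Set.union_subset_union_right X (Set.sInter_subset_of_mem hA)
    · exact subset_rfl
  · intro Y hY X
    unfold Cop
    split_ifs with h
    · intro x hx
      rcases hx with hx | hx
      · exact Or.inl hx
      · by_cases hxX : x ∈ X
        · exact Or.inl hxX
        · refine Or.inr (Set.mem_sInter.mpr fun A hA => ?_)
          have := hY A hA X
          unfold Cop at this
          rw [if_pos h, if_pos h] at this
          rcases this (Or.inr hx) with h1 | h1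
          · exact absurd h1 hxX
          · exact h1
    · exact subset_rfl
end

section
/- Let L be a type and A A₁ B : Set L. Then for every X : Set L: C(A,B)(X) ∪ C(A₁,B)(X) = C(A ∪ A₁, B)(X) = ⋂ {Y : Set L | X ⊆ Y ∧ Y = C(A,B)(Y) ∧ Y = C(A₁,B)(Y)}. In particular, on the family 𝒞(B) = {C(X,B) | X : Set L} the pointwise union join coincides with Wójcicki's join ∨_w. -/
open scoped Classical

/-- Theorem 3.1 (join part): on the family 𝒞(B), the pointwise union join
coincides with Wójcicki's join ∨_w. -/
theorem stmt_11 {L : Type*} (A A₁ B : Set L) :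
    ∀ X : Set L,
      Cop A B X ∪ Cop A₁ B X = Cop (A ∪ A₁) B X ∧
      Cop (A ∪ A₁) B X =
        ⋂₀ {Y : Set L | X ⊆ Y ∧ Y = Cop A B Y ∧ Y = Cop A₁ B Y} := by
  intro X
  by_cases h : X ∩ B = ∅
  · simp only [Cop, h, ne_eq, not_true_eq_false, if_false]
    refine ⟨by simp [Cop, h], ?_⟩
    apply subset_antisymm
    · intro x hx Y hY
      exact hY.1 hx
    · intro x hx
      exact hx X ⟨le_refl _, by simp [Cop, h], by simp [Cop, h]⟩
  · have e1 : Cop A B X = X ∪ A := by simp [Cop, h]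
    have e2 : Cop A₁ B X = X ∪ A₁ := by simp [Cop, h]
    have e3 : Cop (A ∪ A₁) B X = X ∪ (A ∪ A₁) := by simp [Cop, h]
    refine ⟨by rw [e1, e2, e3]; ext x; simp; tauto, ?_⟩
    rw [e3]
    apply subset_antisymm
    · intro x hx Y hY
      obtain ⟨hXY, hA, hA₁⟩ := hY
      have hYB : Y ∩ B ≠ ∅ := by
        intro he
        apply h
        exact Set.eq_empty_of_subset_empty (he ▸ Set.inter_subset_inter_left B hXY)
      have hAY : A ⊆ Y := by
        intro a ha
        rw [hA]; simp [Cop, hYB]; tauto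
      have hA₁Y : A₁ ⊆ Y := by
        intro a ha
        rw [hA₁]; simp [Cop, hYB]; tauto
      rcases hx with hx | hx | hx
      · exact hXY hx
      · exact hAY hx
      · exact hA₁Y hx
    · intro x hx
      refine hx (X ∪ (A ∪ A₁)) ⟨Set.subset_union_left, ?_, ?_⟩ <;>
      · simp only [Cop]
        have : (X ∪ (A ∪ A₁)) ∩ B ≠ ∅ := by
          intro he
          apply h
          exact Set.eq_empty_of_subset_empty (he ▸ Set.inter_subset_inter_left B Set.subset_union_left)
        rw [if_pos this]
        ext y; simp; tauto
end

section
/- Let L be a type, B : Set L, and let 𝒜 be a nonempty family of subsets of L. Then C(⋃₀ 𝒜, B) is the supremum of the family {C(A, B) | A ∈ 𝒜} within 𝒞(B) = {C(X,B) | X : Set L} under the pointwise order: C(A, B) ≤ C(⋃₀ 𝒜, B) for every A ∈ 𝒜, and for any Y : Set L, if C(A, B) ≤ C(Y, B) for every A ∈ 𝒜 then C(⋃₀ 𝒜, B) ≤ C(Y, B). -/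
open scoped Classical

/-- Theorem 3.1 (supremum part): C(⋃₀ 𝒜, B) is the supremum of
{C(A,B) | A ∈ 𝒜} in the pointwise order. -/
theorem stmt_12 {L : Type*} (B : Set L) (𝒜 : Set (Set L)) (h𝒜 : 𝒜.Nonempty) :
    (∀ A ∈ 𝒜, ∀ X : Set L, Cop A B X ⊆ Cop (⋃₀ 𝒜) B X) ∧
    (∀ Y : Set L, (∀ A ∈ 𝒜, ∀ X : Set L, Cop A B X ⊆ Cop Y B X) →
      ∀ X : Set L, Cop (⋃₀ 𝒜) B X ⊆ Cop Y B X) := by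
  constructor
  · intro A hA X
    unfold Cop
    by_cases h : X ∩ B ≠ ∅
    · rw [if_pos h, if_pos h]
      exact Set.union_subset_union_right X (Set.subset_sUnion_of_mem hA)
    · simp [h]
  · intro Y hY X
    unfold Cop
    by_cases h : X ∩ B ≠ ∅
    · rw [if_pos h, if_pos h]
      rintro x (hx | ⟨A, hA, hxA⟩)
      · exact Or.inl hx
      · have := hY A hA X
        simp only [Cop] at this; rw [if_pos h, if_pos h] at this
        exact this (Or.inr hxA)
    · simp [h]
end

section
/- Let L be a type and A B : Set L with A and B nonempty, A ≠ Set.univ, B ⊆ A, and B ≠ A. Then there exists D : Set L such that C(A, B) and C(D, B) are incomparable in the pointwise order, i.e. neither C(A,B) ≤ C(D,B) nor C(D,B) ≤ C(A,B); hence the family 𝒞(B) = {C(X,B) | X : Set L} is not a chain. -/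
open scoped Classical

/-- Theorem 3.1 (final part): under the stated hypotheses the family 𝒞(B)
is not a chain. -/
theorem stmt_13 {L : Type*} (A B : Set L) (hA : A.Nonempty) (hB : B.Nonempty)
    (hAuniv : A ≠ Set.univ) (hBA : B ⊆ A) (hne : B ≠ A) :
    ∃ D : Set L,
      ¬ (∀ X : Set L, Cop A B X ⊆ Cop D B X) ∧
      ¬ (∀ X : Set L, Cop D B X ⊆ Cop A B X) := by
  obtain ⟨u, hu⟩ : ∃ u, u ∉ A := by
    by_contra h
    push_neg at h
    exact hAuniv (Set.eq_univ_iff_forall.2 h)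
  obtain ⟨a, haA, haB⟩ : ∃ a, a ∈ A ∧ a ∉ B := by
    by_contra h
    push_neg at h
    exact hne (Set.Subset.antisymm hBA h)
  refine ⟨B ∪ {u}, ?_, ?_⟩
  · intro h
    have hBB : B ∩ B ≠ ∅ := by
      simp [Set.inter_self]
      exact Set.nonempty_iff_ne_empty.mp hB
    have := h B
    simp only [Cop, if_pos hBB] at this
    have ha : a ∈ B ∪ (B ∪ {u}) := this (Or.inr haA)
    rcases ha with h1 | h2
    · exact haB h1
    · rcases h2 with h1 | h2
      · exact haB h1
      · exact hu (h2 ▸ haA)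
  · intro h
    have hBB : B ∩ B ≠ ∅ := by
      simp [Set.inter_self]
      exact Set.nonempty_iff_ne_empty.mp hB
    have := h B
    simp only [Cop, if_pos hBB] at this
    have hu' : u ∈ B ∪ A := this (Or.inr (Or.inr rfl))
    rcases hu' with h1 | h2
    · exact hu (hBA h1)
    · exact hu h2
end

section
/- Let L be a type such that there exists an injection f : ℕ → L. Then there exists a sequence (Cₙ) (n ≥ 1) of finite consequence operators on L such that for every n ≥ 1: Cₙ ≠ I, C_{n+1} ≤ Cₙ, and C_{n+1} ≠ Cₙ, where I is the identity operator and ≤ is the pointwise order. In particular the set of finite consequence operators on L does not satisfy the descending chain condition. -/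
/-- Example 3.2: on an infinite (Dedekind-infinite) language there is a
strictly descending chain of finite consequence operators, none equal to
the identity; hence the descending chain condition fails. -/
theorem stmt_14 {L : Type*} (f : ℕ → L) (hf : Function.Injective f) :
    ∃ C : ℕ → (Set L → Set L),
      ∀ n : ℕ, 1 ≤ n →
        IsFiniteConsequenceOperator (C n) ∧
        C n ≠ (fun X : Set L => X) ∧
        (∀ X : Set L, C (n + 1) X ⊆ C n X) ∧
        C (n + 1) ≠ C n := by
  refine ⟨fun n X => X ∪ {y | y = f 0 ∧ ∃ k, n ≤ k ∧ f k ∈ X}, fun n hn => ?_⟩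
  have hmono : ∀ X Y : Set L, X ⊆ Y →
      (X ∪ {y | y = f 0 ∧ ∃ k, n ≤ k ∧ f k ∈ X}) ⊆
      (Y ∪ {y | y = f 0 ∧ ∃ k, n ≤ k ∧ f k ∈ Y}) := by
    rintro X Y hXY y (hy | ⟨rfl, k, hk, hkX⟩)
    · exact Or.inl (hXY hy)
    · exact Or.inr ⟨rfl, k, hk, hXY hkX⟩
  refine ⟨⟨⟨fun X => Set.subset_union_left, fun X => ?_, hmono⟩, fun X => ?_⟩, ?_, ?_, ?_⟩
  · -- idempotent
    apply Set.Subset.antisymm _ Set.subset_union_left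
    rintro y (hy | ⟨rfl, k, hk, (hkX | ⟨hk0, _⟩)⟩)
    · exact hy
    · exact Or.inr ⟨rfl, k, hk, hkX⟩
    · exfalso; have := hf hk0; omega
  · -- finitary
    apply Set.Subset.antisymm
    · rintro y (hy | ⟨rfl, k, hk, hkX⟩)
      · exact Set.mem_biUnion ⟨Set.singleton_subset_iff.2 hy, Set.finite_singleton y⟩
          (Or.inl rfl)
      · exact Set.mem_biUnion ⟨Set.singleton_subset_iff.2 hkX, Set.finite_singleton _⟩
          (Or.inr ⟨rfl, k, hk, rfl⟩)
    · refine Set.iUnion₂_subset fun A hA => hmono A X hA.1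
  · -- ≠ identity
    intro h
    have h2 := congrFun h {f n}
    have : f 0 ∈ ({f n} : Set L) := by
      rw [← h2]; exact Or.inr ⟨rfl, n, le_refl n, rfl⟩
    have := hf this
    omega
  · -- C (n+1) ≤ C n
    rintro X y (hy | ⟨rfl, k, hk, hkX⟩)
    · exact Or.inl hy
    · exact Or.inr ⟨rfl, k, by omega, hkX⟩
  · -- C (n+1) ≠ C n
    intro h
    have h2 := congrFun h {f n}
    simp only at h2
    have h3 : f 0 ∈ ({f n} : Set L) ∪ {y | y = f 0 ∧ ∃ k, n + 1 ≤ k ∧ f k ∈ ({f n} : Set L)} := by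
      rw [h2]; exact Or.inr ⟨rfl, n, le_refl n, rfl⟩
    rcases h3 with h3 | ⟨_, k, hk, hkX⟩
    · have := hf h3; omega
    · have := hf hkX; omega
end
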